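/- arXiv:1302.2178 — 3 statements merged into one kernel-verified Lean document; each statement's English description precedes it below -/
import Mathlib

section
/- The function f(x) = ((√x − √(N'/Q')·√(Q'−x))₊)² defined on [0, Q'] is convex and non-decreasing, where (·)₊ denotes the positive part. -/
/-!
With `c = √(N'/Q') ≥ 0`, the function `g x = √x - c √(Q' - x)` is nondecreasing and vanishes at
`x₀ = c² Q' / (1 + c²)`, so `f x = g (max x x₀) ^ 2`. On `[0, Q']` we have
`g² = x + c² (Q' - x) - 2c √(x (Q' - x))`, an affine function minus a concave one, hence convex;
and `g²` is nondecreasing on `[x₀, Q']`, where `g ≥ 0`. Precomposing a nondecreasing convex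
function with the convex map `x ↦ max x x₀` preserves convexity.
-/

open Set

theorem ConcaveOn.sqrt {E : Type*} [AddCommMonoid E] [Module ℝ E] {s : Set E} {f : E → ℝ}
    (hf : ConcaveOn ℝ s f) (hf₀ : ∀ x ∈ s, 0 ≤ f x) : ConcaveOn ℝ s fun x => √(f x) := by
  refine ⟨hf.1, fun x hx y hy a b ha hb hab => ?_⟩
  calc a • √(f x) + b • √(f y) ≤ √(a • f x + b • f y) :=
        Real.strictConcaveOn_sqrt.concaveOn.2 (hf₀ x hx) (hf₀ y hy) ha hb hab
    _ ≤ √(f (a • x + b • y)) := Real.sqrt_le_sqrt (hf.2 hx hy ha hb hab)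

theorem concaveOn_mul_const_sub (Q : ℝ) : ConcaveOn ℝ univ fun x : ℝ => x * (Q - x) := by
  refine ⟨convex_univ, fun x _ y _ a b ha hb hab => ?_⟩
  obtain rfl : b = 1 - a := by linarith
  simp only [smul_eq_mul]
  nlinarith [mul_nonneg (mul_nonneg ha hb) (sq_nonneg (x - y))]

theorem convexOn_sq_sqrt_sub_mul_sqrt_const_sub {Q c : ℝ} (hc : 0 ≤ c) :
    ConvexOn ℝ (Icc 0 Q) fun x => (√x - c * √(Q - x)) ^ 2 := by
  have hroot : ConcaveOn ℝ (Icc 0 Q) fun x => √(x * (Q - x)) :=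
    ((concaveOn_mul_const_sub Q).subset (subset_univ _) (convex_Icc 0 Q)).sqrt
      fun x hx => mul_nonneg hx.1 (sub_nonneg.2 hx.2)
  have haffine : ConvexOn ℝ (Icc 0 Q) fun x => x + c ^ 2 * (Q - x) := by
    refine ⟨convex_Icc 0 Q, fun x _ y _ a b _ _ hab => le_of_eq ?_⟩
    obtain rfl : b = 1 - a := by linarith
    simp only [smul_eq_mul]
    ring
  refine (haffine.sub (hroot.smul (by positivity : 0 ≤ 2 * c))).congr fun x hx => ?_
  have hx' : 0 ≤ Q - x := sub_nonneg.2 hx.2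
  simp only [Pi.sub_apply, smul_eq_mul, Real.sqrt_mul hx.1]
  nlinarith [Real.sq_sqrt hx.1, Real.sq_sqrt hx']

theorem monotone_sqrt_sub_mul_sqrt_const_sub {Q c : ℝ} (hc : 0 ≤ c) :
    Monotone fun x => √x - c * √(Q - x) := fun x y hxy => by
  dsimp only
  gcongr

theorem sqrt_sub_mul_sqrt_const_sub_eq_zero {Q c : ℝ} (hc : 0 ≤ c) :
    √(c ^ 2 * Q / (1 + c ^ 2)) - c * √(Q - c ^ 2 * Q / (1 + c ^ 2)) = 0 := by
  have h : Q - c ^ 2 * Q / (1 + c ^ 2) = Q / (1 + c ^ 2) := by field_simp; ring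
  rw [h, mul_div_assoc, Real.sqrt_mul (sq_nonneg c), Real.sqrt_sq hc, sub_self]

theorem ConvexOn.comp_max_const {q : ℝ → ℝ} {a b l : ℝ} (hab : a ≤ b)
    (hq : ConvexOn ℝ (Icc a b) q) (hq_mono : MonotoneOn q (Icc a b)) :
    ConvexOn ℝ (Icc l b) fun x => q (max x a) := by
  have hmax : ∀ x ∈ Icc l b, max x a ∈ Icc a b := fun x hx => ⟨le_max_right _ _, max_le hx.2 hab⟩
  have hcvx : ConvexOn ℝ (Icc l b) fun x => max x a :=
    (convexOn_id (convex_Icc l b)).sup (convexOn_const a (convex_Icc l b))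
  refine ⟨convex_Icc l b, fun x hx y hy s t hs ht hst => ?_⟩
  calc q (max (s • x + t • y) a) ≤ q (s • max x a + t • max y a) :=
        hq_mono (hmax _ (convex_Icc l b hx hy hs ht hst))
          (hq.1 (hmax x hx) (hmax y hy) hs ht hst) (hcvx.2 hx hy hs ht hst)
    _ ≤ s • q (max x a) + t • q (max y a) := hq.2 (hmax x hx) (hmax y hy) hs ht hst

theorem stmt1_general (Q' N' : ℝ) (hQ : 0 < Q')
    (f : ℝ → ℝ)
    (hf : ∀ x, f x = (max (Real.sqrt x - Real.sqrt (N' / Q') * Real.sqrt (Q' - x)) 0) ^ 2) :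
    ConvexOn ℝ (Set.Icc 0 Q') f ∧ MonotoneOn f (Set.Icc 0 Q') := by
  set c := √(N' / Q')
  have hc : 0 ≤ c := Real.sqrt_nonneg _
  set g : ℝ → ℝ := fun x => √x - c * √(Q' - x)
  set x₀ := c ^ 2 * Q' / (1 + c ^ 2)
  have hg : Monotone g := monotone_sqrt_sub_mul_sqrt_const_sub hc
  have hgx₀ : g x₀ = 0 := sqrt_sub_mul_sqrt_const_sub_eq_zero hc
  have hx₀ : x₀ ∈ Icc 0 Q' := ⟨by positivity, div_le_of_le_mul₀ (by positivity) hQ.le (by nlinarith)⟩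
  have hf_eq : ∀ x, f x = g (max x x₀) ^ 2 := fun x => by rw [hf, hg.map_max, hgx₀]
  constructor
  · have hq_mono : MonotoneOn (fun x => g x ^ 2) (Icc x₀ Q') := fun x hx y _ hxy =>
      pow_le_pow_left₀ (hgx₀ ▸ hg hx.1) (hg hxy) 2
    exact (((convexOn_sq_sqrt_sub_mul_sqrt_const_sub hc).subset
      (Icc_subset_Icc_left hx₀.1) (convex_Icc _ _)).comp_max_const hx₀.2 hq_mono).congr
        fun x _ => (hf_eq x).symm
  · intro x _ y _ hxy
    rw [hf, hf]
    gcongr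

theorem stmt1 (Q' N' : ℝ) (hQ : 0 < Q') (hN : 0 < N')
    (f : ℝ → ℝ)
    (hf : ∀ x, f x = (max (Real.sqrt x - Real.sqrt (N' / Q') * Real.sqrt (Q' - x)) 0) ^ 2) :
    ConvexOn ℝ (Set.Icc 0 Q') f ∧ MonotoneOn f (Set.Icc 0 Q') :=
  stmt1_general Q' N' hQ f hf
end

section
/- Let S = Ṽ + W with Ṽ, W uncorrelated zero-mean with variances Q', N'. Let Ŝ be any random variable, V̂ the best linear estimator of Ṽ given Ŝ, D' = Var(Ṽ − V̂) the corresponding MMSE, and D = Var(S − Ŝ). Then D ≥ ((√D' − √(N'/Q')·√(Q'−D'))₊)². -/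
/-!
In `L²` the statement is Euclidean geometry. Write `p` for the projection of `v = Ṽ` on the
line of `s = Ŝ`, so that `D' = ‖v - p‖²` and `Q' - D' = ‖p‖²`. Expanding, with `v ⊥ w`,
`D = ‖v‖² + ‖w‖² + ‖s‖² - 2⟪v, s⟫ - 2⟪w, s⟫`. Here `⟪v, s⟫ ≤ ‖p‖ ‖s‖`, and since `w ⊥ v`,
`⟪w, s⟫` only sees the component of `s` orthogonal to `v`, whose length is `‖v - p‖ ‖s‖ / ‖v‖`.
So `D` is bounded below by a quadratic in `‖s‖` whose minimum is `(√D' - √(N'/Q') √(Q' - D'))²`.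
-/

open MeasureTheory ProbabilityTheory

open RealInnerProductSpace

section LineProjection

variable {E : Type*} [NormedAddCommGroup E] [InnerProductSpace ℝ E]

theorem inner_sub_proj_self_eq_zero (v s : E) : ⟪v - (⟪v, s⟫ / ‖s‖ ^ 2) • s, s⟫ = 0 := by
  rcases eq_or_ne s 0 with rfl | hs
  · simp
  have : ‖s‖ ≠ 0 := norm_ne_zero_iff.mpr hs
  rw [inner_sub_left, real_inner_smul_left, real_inner_self_eq_norm_sq]
  field_simp
  ring

theorem norm_proj_mul_norm (v s : E) : ‖(⟪v, s⟫ / ‖s‖ ^ 2) • s‖ * ‖s‖ = |⟪v, s⟫| := by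
  rcases eq_or_ne s 0 with rfl | hs
  · simp
  have : ‖s‖ ≠ 0 := norm_ne_zero_iff.mpr hs
  rw [norm_smul, Real.norm_eq_abs, abs_div, abs_pow, abs_norm]
  field_simp

theorem norm_sq_eq_norm_sub_proj_sq_add (v s : E) :
    ‖v‖ ^ 2 = ‖v - (⟪v, s⟫ / ‖s‖ ^ 2) • s‖ ^ 2 + ‖(⟪v, s⟫ / ‖s‖ ^ 2) • s‖ ^ 2 := by
  have horth : ⟪v - (⟪v, s⟫ / ‖s‖ ^ 2) • s, (⟪v, s⟫ / ‖s‖ ^ 2) • s⟫ = 0 := by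
    rw [real_inner_smul_right, inner_sub_proj_self_eq_zero, mul_zero]
  simpa [sq] using norm_add_sq_eq_norm_sq_add_norm_sq_real horth

theorem norm_sub_proj_sq_mul_norm_sq (v s : E) :
    ‖v - (⟪v, s⟫ / ‖s‖ ^ 2) • s‖ ^ 2 * ‖s‖ ^ 2 = ‖v‖ ^ 2 * ‖s‖ ^ 2 - ⟪v, s⟫ ^ 2 := by
  rw [norm_sq_eq_norm_sub_proj_sq_add v s, ← sq_abs ⟪v, s⟫, ← norm_proj_mul_norm]
  ring

/-- Both sides are the area of the parallelogram spanned by `v` and `s`. -/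
theorem norm_sub_proj_mul_norm_comm (v s : E) :
    ‖v - (⟪v, s⟫ / ‖s‖ ^ 2) • s‖ * ‖s‖ = ‖s - (⟪s, v⟫ / ‖v‖ ^ 2) • v‖ * ‖v‖ := by
  refine (sq_eq_sq₀ (by positivity) (by positivity)).mp ?_
  rw [mul_pow, mul_pow, norm_sub_proj_sq_mul_norm_sq, norm_sub_proj_sq_mul_norm_sq, real_inner_comm]
  ring

theorem inner_le_norm_mul_norm_sub_proj {v w : E} (hvw : ⟪v, w⟫ = 0) (s : E) :
    ⟪w, s⟫ ≤ ‖w‖ * ‖s - (⟪s, v⟫ / ‖v‖ ^ 2) • v‖ := by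
  have : ⟪w, s - (⟪s, v⟫ / ‖v‖ ^ 2) • v⟫ = ⟪w, s⟫ := by
    rw [inner_sub_right, real_inner_smul_right, real_inner_comm v w, hvw, mul_zero, sub_zero]
  exact this ▸ real_inner_le_norm _ _

theorem norm_sub_proj_sub_le_norm_add_sub {v w : E} (hvw : ⟪v, w⟫ = 0) (s : E) :
    ‖v - (⟪v, s⟫ / ‖s‖ ^ 2) • s‖ - ‖w‖ / ‖v‖ * ‖(⟪v, s⟫ / ‖s‖ ^ 2) • s‖ ≤ ‖v + w - s‖ := by
  rcases eq_or_ne v 0 with rfl | hv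
  · simp
  have hV : 0 < ‖v‖ := norm_pos_iff.mpr hv
  set r := ‖v - (⟪v, s⟫ / ‖s‖ ^ 2) • s‖
  set q := ‖(⟪v, s⟫ / ‖s‖ ^ 2) • s‖
  set n := ‖w‖ / ‖v‖
  have hw : ‖w‖ = n * ‖v‖ := (div_mul_cancel₀ _ hV.ne').symm
  have hexpand : ‖v + w - s‖ ^ 2 = ‖v‖ ^ 2 + ‖w‖ ^ 2 + ‖s‖ ^ 2 - 2 * ⟪v, s⟫ - 2 * ⟪w, s⟫ := by
    rw [norm_sub_sq_real, norm_add_sq_real, inner_add_left, hvw]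
    ring
  have hvs : ⟪v, s⟫ ≤ q * ‖s‖ := (le_abs_self _).trans (norm_proj_mul_norm v s).ge
  have hws : ⟪w, s⟫ ≤ n * r * ‖s‖ := by
    have h := inner_le_norm_mul_norm_sub_proj hvw s
    rw [hw, mul_assoc, mul_comm ‖v‖, ← norm_sub_proj_mul_norm_comm] at h
    linarith
  have hpyth := norm_sq_eq_norm_sub_proj_sq_add v s
  have hn : 0 ≤ n := by positivity
  -- Minimising over `‖s‖` leaves `(r² + q²)(1 + n²) - (q + n r)² = (r - n q)²`.
  have hsq : (r - n * q) ^ 2 ≤ ‖v + w - s‖ ^ 2 := by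
    rw [hexpand, hw, mul_pow, hpyth]
    nlinarith [sq_nonneg (‖s‖ - q - n * r), norm_nonneg s]
  exact (abs_le_of_sq_le_sq hsq (norm_nonneg _)).trans' (le_abs_self _)

end LineProjection

section L2

variable {α : Type*} [MeasurableSpace α] {μ : Measure α} {f g : α → ℝ}

theorem integral_mul_eq_inner_toLp (hf : MemLp f 2 μ) (hg : MemLp g 2 μ) :
    ∫ x, f x * g x ∂μ = ⟪hf.toLp f, hg.toLp g⟫ := by
  rw [L2.inner_def]
  refine integral_congr_ae ?_
  filter_upwards [hf.coeFn_toLp, hg.coeFn_toLp] with x hfx hgx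
  simp [hfx, hgx, mul_comm]

theorem integral_sq_eq_norm_toLp_sq (hf : MemLp f 2 μ) :
    ∫ x, f x ^ 2 ∂μ = ‖hf.toLp f‖ ^ 2 := by
  rw [← real_inner_self_eq_norm_sq, ← integral_mul_eq_inner_toLp]
  simp only [sq]

end L2

theorem stmt5_general {Ω : Type*} [MeasureSpace Ω]
    (Q' N' : ℝ)
    (Vt W Sh : Ω → ℝ)
    (hVt2 : MemLp Vt 2 (ℙ : Measure Ω)) (hW2 : MemLp W 2 (ℙ : Measure Ω)) (hSh2 : MemLp Sh 2 (ℙ : Measure Ω))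
    (hVtv : ∫ ω, (Vt ω) ^ 2 = Q') (hWv : ∫ ω, (W ω) ^ 2 = N')
    (hunc : ∫ ω, Vt ω * W ω = 0)
    (a D' D : ℝ)
    (ha : a = (∫ ω, Vt ω * Sh ω) / (∫ ω, (Sh ω) ^ 2))
    (hD' : D' = ∫ ω, (Vt ω - a * Sh ω) ^ 2)
    (hD : D = ∫ ω, ((Vt ω + W ω) - Sh ω) ^ 2) :
    D ≥ (max (Real.sqrt D' - Real.sqrt (N' / Q') * Real.sqrt (Q' - D')) 0) ^ 2 := by
  set v := hVt2.toLp Vt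
  set w := hW2.toLp W
  set s := hSh2.toLp Sh
  have hvw : ⟪v, w⟫ = 0 := by rw [← integral_mul_eq_inner_toLp, hunc]
  replace ha : a = ⟪v, s⟫ / ‖s‖ ^ 2 := by
    rw [ha, integral_mul_eq_inner_toLp hVt2 hSh2, integral_sq_eq_norm_toLp_sq hSh2]
  have hQ : Q' = ‖v‖ ^ 2 := by rw [← hVtv, integral_sq_eq_norm_toLp_sq]
  have hN : N' = ‖w‖ ^ 2 := by rw [← hWv, integral_sq_eq_norm_toLp_sq]
  replace hD' : D' = ‖v - a • s‖ ^ 2 :=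
    hD'.trans (integral_sq_eq_norm_toLp_sq (hVt2.sub (hSh2.const_smul a)))
  replace hD : D = ‖v + w - s‖ ^ 2 :=
    hD.trans (integral_sq_eq_norm_toLp_sq ((hVt2.add hW2).sub hSh2))
  have hpyth : ‖v‖ ^ 2 - ‖v - a • s‖ ^ 2 = ‖a • s‖ ^ 2 := by
    rw [ha, norm_sq_eq_norm_sub_proj_sq_add v s]
    ring
  have hbound := norm_sub_proj_sub_le_norm_add_sub hvw s
  rw [← ha] at hbound
  rw [hD, hD', hQ, hN, hpyth, ← div_pow, Real.sqrt_sq (norm_nonneg _), Real.sqrt_sq (norm_nonneg _),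
    Real.sqrt_sq (by positivity)]
  exact pow_le_pow_left₀ (le_max_right _ _) (max_le hbound (norm_nonneg _)) 2

theorem stmt5 {Ω : Type*} [MeasureSpace Ω] [IsProbabilityMeasure (ℙ : Measure Ω)]
    (Q' N' : ℝ) (hQ : 0 < Q') (hN : 0 < N')
    (Vt W Sh : Ω → ℝ)
    (hVt2 : MemLp Vt 2 (ℙ : Measure Ω)) (hW2 : MemLp W 2 (ℙ : Measure Ω)) (hSh2 : MemLp Sh 2 (ℙ : Measure Ω))
    (hVtm : ∫ ω, Vt ω = 0) (hWm : ∫ ω, W ω = 0) (hShm : ∫ ω, Sh ω = 0)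
    (hVtv : ∫ ω, (Vt ω) ^ 2 = Q') (hWv : ∫ ω, (W ω) ^ 2 = N')
    (hunc : ∫ ω, Vt ω * W ω = 0)
    (a D' D : ℝ)
    (ha : a = (∫ ω, Vt ω * Sh ω) / (∫ ω, (Sh ω) ^ 2))
    (hD' : D' = ∫ ω, (Vt ω - a * Sh ω) ^ 2)
    (hD : D = ∫ ω, ((Vt ω + W ω) - Sh ω) ^ 2)
    (h1 : 0 < D') (h2 : D' < Q') :
    D ≥ (max (Real.sqrt D' - Real.sqrt (N' / Q') * Real.sqrt (Q' - D')) 0) ^ 2 :=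
  stmt5_general Q' N' Vt W Sh hVt2 hW2 hSh2 hVtv hWv hunc a D' D ha hD' hD
end

section
/- Let Ṽ, X̃, W, Z be independent zero-mean Gaussians with variances Q', βP, N', N, let g ≥ 0, Y = (1+g)Ṽ + X̃ + W + Z and U = X̃ + α(1+g)Ṽ. Then I(U;Y) − I(U;Ṽ) = (1/2)log[ βP(βP + (1+g)²Q' + N' + N) / ((N'+N)(βP + α²(1+g)²Q') + (1−α)²β(1+g)²PQ') ]. -/
/-!
Second moments of square-integrable functions are inner products in `L²`, so the moments of `U`
and `Y` follow from bilinearity and the pairwise orthogonality of `Ṽ, X̃, W, Z`. The two logarithms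
then combine into one, because `Var U · Var Ṽ - Cov(U, Ṽ)² = βPQ'` while `Var U · Var Y - Cov(U, Y)²`
is exactly the denominator of the right-hand side.
-/

open MeasureTheory ProbabilityTheory
open scoped InnerProductSpace

namespace MeasureTheory.MemLp

variable {Ω : Type*} {m : MeasurableSpace Ω} {μ : Measure Ω} {f g : Ω → ℝ}

theorem integral_mul_eq_inner (hf : MemLp f 2 μ) (hg : MemLp g 2 μ) :
    ∫ ω, f ω * g ω ∂μ = inner ℝ (hf.toLp f) (hg.toLp g) := by
  rw [L2.inner_def]
  refine integral_congr_ae ?_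
  filter_upwards [hf.coeFn_toLp, hg.coeFn_toLp] with ω hfω hgω
  simp [hfω, hgω, mul_comm]

theorem integral_sq_eq_inner (hf : MemLp f 2 μ) :
    ∫ ω, f ω ^ 2 ∂μ = inner ℝ (hf.toLp f) (hf.toLp f) := by
  simp only [sq, hf.integral_mul_eq_inner hf]

end MeasureTheory.MemLp

section Orthogonal

variable {E : Type*} [NormedAddCommGroup E] [InnerProductSpace ℝ E] {v x w z : E}

theorem inner_add_smul_self_of_inner_eq_zero (hvx : ⟪v, x⟫_ℝ = 0) (a : ℝ) :
    ⟪x + a • v, x + a • v⟫_ℝ = ⟪x, x⟫_ℝ + a ^ 2 * ⟪v, v⟫_ℝ := by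
  simp only [inner_add_left, inner_add_right, real_inner_smul_left, real_inner_smul_right,
    real_inner_comm v x, hvx]
  ring

theorem inner_add_smul_left_of_inner_eq_zero (hvx : ⟪v, x⟫_ℝ = 0) (a : ℝ) :
    ⟪x + a • v, v⟫_ℝ = a * ⟪v, v⟫_ℝ := by
  rw [inner_add_left, real_inner_smul_left, real_inner_comm, hvx, zero_add]

theorem inner_smul_add_add_add_self_of_pairwise_inner_eq_zero (hvx : ⟪v, x⟫_ℝ = 0)
    (hvw : ⟪v, w⟫_ℝ = 0) (hvz : ⟪v, z⟫_ℝ = 0) (hxw : ⟪x, w⟫_ℝ = 0) (hxz : ⟪x, z⟫_ℝ = 0)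
    (hwz : ⟪w, z⟫_ℝ = 0) (c : ℝ) :
    ⟪c • v + x + w + z, c • v + x + w + z⟫_ℝ
      = c ^ 2 * ⟪v, v⟫_ℝ + ⟪x, x⟫_ℝ + ⟪w, w⟫_ℝ + ⟪z, z⟫_ℝ := by
  simp only [inner_add_left, inner_add_right, real_inner_smul_left, real_inner_smul_right,
    real_inner_comm v x, real_inner_comm v w, real_inner_comm v z, real_inner_comm x w,
    real_inner_comm x z, real_inner_comm w z, hvx, hvw, hvz, hxw, hxz, hwz]
  ring

theorem inner_add_smul_smul_add_add_add_of_pairwise_inner_eq_zero (hvx : ⟪v, x⟫_ℝ = 0)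
    (hvw : ⟪v, w⟫_ℝ = 0) (hvz : ⟪v, z⟫_ℝ = 0) (hxw : ⟪x, w⟫_ℝ = 0) (hxz : ⟪x, z⟫_ℝ = 0)
    (a c : ℝ) :
    ⟪x + a • v, c • v + x + w + z⟫_ℝ = ⟪x, x⟫_ℝ + a * c * ⟪v, v⟫_ℝ := by
  simp only [inner_add_left, inner_add_right, real_inner_smul_left, real_inner_smul_right,
    real_inner_comm v x, hvx, hvw, hvz, hxw, hxz]
  ring

end Orthogonal

open Real in
theorem half_log_div_sub_half_log_div {a b b' c c' : ℝ} (ha : 0 < a) (hb : 0 < b) (hb' : 0 < b')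
    (hd : 0 < a * b - c ^ 2) (hd' : 0 < a * b' - c' ^ 2) :
    1 / 2 * log (a * b / (a * b - c ^ 2)) - 1 / 2 * log (a * b' / (a * b' - c' ^ 2))
      = 1 / 2 * log (b * (a * b' - c' ^ 2) / (b' * (a * b - c ^ 2))) := by
  rw [← mul_sub, ← log_div (by positivity) (by positivity)]
  congr 2
  field_simp

theorem stmt10_general {Ω : Type*} [MeasureSpace Ω]
    (Q' N' N P β α g : ℝ) (hQ : 0 < Q') (hN' : 0 < N') (hN : 0 < N) (hP : 0 < P)
    (hβ : 0 < β)
    (Vt Xt W Z : Ω → ℝ)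
    (hVt2 : MemLp Vt 2 (ℙ : Measure Ω)) (hXt2 : MemLp Xt 2 (ℙ : Measure Ω)) (hW2 : MemLp W 2 (ℙ : Measure Ω)) (hZ2 : MemLp Z 2 (ℙ : Measure Ω))
    (hVtv : ∫ ω, (Vt ω) ^ 2 = Q') (hXtv : ∫ ω, (Xt ω) ^ 2 = β * P)
    (hWv : ∫ ω, (W ω) ^ 2 = N') (hZv : ∫ ω, (Z ω) ^ 2 = N)
    (h12 : ∫ ω, Vt ω * Xt ω = 0) (h13 : ∫ ω, Vt ω * W ω = 0) (h14 : ∫ ω, Vt ω * Z ω = 0)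
    (h23 : ∫ ω, Xt ω * W ω = 0) (h24 : ∫ ω, Xt ω * Z ω = 0) (h34 : ∫ ω, W ω * Z ω = 0)
    (Y U : Ω → ℝ)
    (hY : Y = fun ω => (1 + g) * Vt ω + Xt ω + W ω + Z ω)
    (hU : U = fun ω => Xt ω + α * (1 + g) * Vt ω) :
    -- I(U;Y) - I(U;Ṽ), each mutual information computed by the Gaussian formula
    -- I(A;B) = (1/2) log( Var A · Var B / (Var A · Var B − Cov(A,B)²) )
    (1 / 2) * Real.log ((∫ ω, (U ω) ^ 2) * (∫ ω, (Y ω) ^ 2) /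
        ((∫ ω, (U ω) ^ 2) * (∫ ω, (Y ω) ^ 2) - (∫ ω, U ω * Y ω) ^ 2)) -
      (1 / 2) * Real.log ((∫ ω, (U ω) ^ 2) * (∫ ω, (Vt ω) ^ 2) /
        ((∫ ω, (U ω) ^ 2) * (∫ ω, (Vt ω) ^ 2) - (∫ ω, U ω * Vt ω) ^ 2)) =
    (1 / 2) * Real.log (β * P * (β * P + (1 + g) ^ 2 * Q' + N' + N) /
      ((N' + N) * (β * P + α ^ 2 * (1 + g) ^ 2 * Q') +
        (1 - α) ^ 2 * β * (1 + g) ^ 2 * P * Q')) := by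
  have hU2 : MemLp U 2 ℙ := hU ▸ hXt2.add (hVt2.const_smul (α * (1 + g)))
  have hY2 : MemLp Y 2 ℙ := hY ▸ (((hVt2.const_smul (1 + g)).add hXt2).add hW2).add hZ2
  have hUlp : hU2.toLp U = hXt2.toLp Xt + (α * (1 + g)) • hVt2.toLp Vt := by
    subst hU
    rw [← MemLp.toLp_const_smul, ← MemLp.toLp_add]
    rfl
  have hYlp : hY2.toLp Y
      = (1 + g) • hVt2.toLp Vt + hXt2.toLp Xt + hW2.toLp W + hZ2.toLp Z := by
    subst hY
    rw [← MemLp.toLp_const_smul, ← MemLp.toLp_add, ← MemLp.toLp_add, ← MemLp.toLp_add]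
    rfl
  simp only [hVt2.integral_sq_eq_inner, hXt2.integral_sq_eq_inner, hW2.integral_sq_eq_inner,
    hZ2.integral_sq_eq_inner, hU2.integral_sq_eq_inner, hY2.integral_sq_eq_inner,
    hVt2.integral_mul_eq_inner hXt2, hVt2.integral_mul_eq_inner hW2,
    hVt2.integral_mul_eq_inner hZ2, hXt2.integral_mul_eq_inner hW2,
    hXt2.integral_mul_eq_inner hZ2, hW2.integral_mul_eq_inner hZ2,
    hU2.integral_mul_eq_inner hY2, hU2.integral_mul_eq_inner hVt2, hUlp, hYlp]
    at hVtv hXtv hWv hZv h12 h13 h14 h23 h24 h34 ⊢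
  rw [inner_add_smul_self_of_inner_eq_zero h12, inner_add_smul_left_of_inner_eq_zero h12,
    inner_smul_add_add_add_self_of_pairwise_inner_eq_zero h12 h13 h14 h23 h24 h34,
    inner_add_smul_smul_add_add_add_of_pairwise_inner_eq_zero h12 h13 h14 h23 h24,
    hVtv, hXtv, hWv, hZv]
  have hdetY : (β * P + (α * (1 + g)) ^ 2 * Q') * ((1 + g) ^ 2 * Q' + β * P + N' + N)
      - (β * P + α * (1 + g) * (1 + g) * Q') ^ 2
      = (N' + N) * (β * P + α ^ 2 * (1 + g) ^ 2 * Q') + (1 - α) ^ 2 * β * (1 + g) ^ 2 * P * Q' := by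
    ring
  have hdetV : (β * P + (α * (1 + g)) ^ 2 * Q') * Q' - (α * (1 + g) * Q') ^ 2 = β * P * Q' := by
    ring
  rw [half_log_div_sub_half_log_div (by positivity) (by positivity) hQ
    (by rw [hdetY]; positivity) (by rw [hdetV]; positivity), hdetY, hdetV]
  congr 2
  field_simp
  ring

theorem stmt10 {Ω : Type*} [MeasureSpace Ω] [IsProbabilityMeasure (ℙ : Measure Ω)]
    (Q' N' N P β α g : ℝ) (hQ : 0 < Q') (hN' : 0 < N') (hN : 0 < N) (hP : 0 < P)
    (hβ : 0 < β) (hβ1 : β ≤ 1) (hg : 0 ≤ g)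
    (Vt Xt W Z : Ω → ℝ)
    (hVt2 : MemLp Vt 2 (ℙ : Measure Ω)) (hXt2 : MemLp Xt 2 (ℙ : Measure Ω)) (hW2 : MemLp W 2 (ℙ : Measure Ω)) (hZ2 : MemLp Z 2 (ℙ : Measure Ω))
    (hVtm : ∫ ω, Vt ω = 0) (hXtm : ∫ ω, Xt ω = 0) (hWm : ∫ ω, W ω = 0) (hZm : ∫ ω, Z ω = 0)
    (hVtv : ∫ ω, (Vt ω) ^ 2 = Q') (hXtv : ∫ ω, (Xt ω) ^ 2 = β * P)
    (hWv : ∫ ω, (W ω) ^ 2 = N') (hZv : ∫ ω, (Z ω) ^ 2 = N)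
    (h12 : ∫ ω, Vt ω * Xt ω = 0) (h13 : ∫ ω, Vt ω * W ω = 0) (h14 : ∫ ω, Vt ω * Z ω = 0)
    (h23 : ∫ ω, Xt ω * W ω = 0) (h24 : ∫ ω, Xt ω * Z ω = 0) (h34 : ∫ ω, W ω * Z ω = 0)
    (Y U : Ω → ℝ)
    (hY : Y = fun ω => (1 + g) * Vt ω + Xt ω + W ω + Z ω)
    (hU : U = fun ω => Xt ω + α * (1 + g) * Vt ω) :
    -- I(U;Y) - I(U;Ṽ), each mutual information computed by the Gaussian formula
    -- I(A;B) = (1/2) log( Var A · Var B / (Var A · Var B − Cov(A,B)²) )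
    (1 / 2) * Real.log ((∫ ω, (U ω) ^ 2) * (∫ ω, (Y ω) ^ 2) /
        ((∫ ω, (U ω) ^ 2) * (∫ ω, (Y ω) ^ 2) - (∫ ω, U ω * Y ω) ^ 2)) -
      (1 / 2) * Real.log ((∫ ω, (U ω) ^ 2) * (∫ ω, (Vt ω) ^ 2) /
        ((∫ ω, (U ω) ^ 2) * (∫ ω, (Vt ω) ^ 2) - (∫ ω, U ω * Vt ω) ^ 2)) =
    (1 / 2) * Real.log (β * P * (β * P + (1 + g) ^ 2 * Q' + N' + N) /
      ((N' + N) * (β * P + α ^ 2 * (1 + g) ^ 2 * Q') +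
        (1 - α) ^ 2 * β * (1 + g) ^ 2 * P * Q')) :=
  stmt10_general Q' N' N P β α g hQ hN' hN hP hβ Vt Xt W Z hVt2 hXt2 hW2 hZ2 hVtv hXtv hWv hZv h12
    h13 h14 h23 h24 h34 Y U hY hU
end
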